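/- arXiv:math/0011102 — 2 statements merged into one kernel-verified Lean document; each statement's English description precedes it below -/
import Mathlib

section
/- Let L be a field with a discrete valuation v: L → ℤ ∪ {∞}, let q ≥ 2 and r ≥ 1 be integers, and let a_0, a_1, …, a_r ∈ L with a_r ≠ 0. Define f: L → L by f(x) = a_0 x + a_1 x^q + … + a_r x^{q^r}. Suppose v(a_r) ≤ 0 and α ∈ L satisfies v(α) < 0 and v(α) < (v(a_i) − v(a_r))/(q^r − q^i) for every 0 ≤ i < r. Then the sequence n ↦ −min{0, v(f^{∘n}(α))}/q^{nr} converges as n → ∞ to −(v(α) + v(a_r)/(q^r − 1)), and this limit is at least 1. -/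
/-!
On elements `x` with `v x ≤ v α < 0` the hypothesis on `α` makes the leading term `a_r x^{q^r}`
strictly dominate the other terms of `f x`, so `v (f x) = q^r v(x) + v(a_r)`, which is again
`≤ v α`. Hence `n ↦ v (f^[n] α)` is the orbit of `v α` under `c ↦ q^r c + v(a_r)`, namely
`q^{nr} (v α + T) - T` with `T = v(a_r)/(q^r - 1)`; dividing by `q^{nr}` gives the limit.
-/

open Filter Topology Finset

theorem map_one_eq_zero_of_map_mul {R : Type*} [MulOneClass R] {f : R → WithTop ℤ}
    (hmul : ∀ x y, f (x * y) = f x + f y) {x : R} (hx : f x ≠ ⊤) : f 1 = 0 := by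
  obtain ⟨m, hm⟩ := WithTop.ne_top_iff_exists.mp hx
  have h := hmul x 1
  rw [mul_one, ← hm] at h
  cases h1 : f 1 with
  | top => simp [h1] at h
  | coe k =>
    rw [h1, ← WithTop.coe_add, WithTop.coe_inj] at h
    rw [show k = 0 by omega]; rfl

theorem map_zero_eq_top_of_map_mul {R : Type*} [MulZeroClass R] {f : R → WithTop ℤ}
    (hmul : ∀ x y, f (x * y) = f x + f y) {x : R} (hx : f x ≠ 0) : f 0 = ⊤ := by
  have h := hmul 0 x
  rw [zero_mul] at h
  cases h0 : f 0 with
  | top => rfl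
  | coe k =>
    cases hfx : f x with
    | top => simp [h0, hfx] at h
    | coe m =>
      rw [h0, hfx, ← WithTop.coe_add, WithTop.coe_inj] at h
      exact absurd (hfx.trans (by rw [show m = 0 by omega]; rfl)) hx

theorem AddValuation.map_sum_eq_of_lt {R Γ₀ : Type*} [Ring R]
    [LinearOrderedAddCommMonoidWithTop Γ₀]
    (v : AddValuation R Γ₀) {ι : Type*} [DecidableEq ι] {s : Finset ι} {f : ι → R} {j : ι}
    (hj : j ∈ s) (hf : ∀ i ∈ s \ {j}, v (f j) < v (f i)) :
    v (∑ i ∈ s, f i) = v (f j) := by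
  rcases eq_or_ne (v (f j)) ⊤ with htop | htop
  · rw [Finset.sum_eq_single_of_mem j hj fun i hi hij =>
      absurd (hf i (by simp [hi, hij])) (htop ▸ not_top_lt)]
  rw [Finset.sum_eq_add_sum_sdiff_singleton_of_mem hj]
  exact v.map_add_eq_of_lt_left (v.map_lt_sum htop hf)

theorem iterate_mul_add_eq {K : Type*} [Field K] {Q : K} (hQ : Q ≠ 1) (B c : K) (n : ℕ) :
    (fun x => Q * x + B)^[n] c = Q ^ n * (c + B / (Q - 1)) - B / (Q - 1) := by
  have hQ' : Q - 1 ≠ 0 := sub_ne_zero.mpr hQ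
  induction n with
  | zero => simp
  | succ n ih =>
    rw [Function.iterate_succ_apply', ih]
    field_simp
    ring

theorem tendsto_iterate_mul_add_div_pow {Q : ℝ} (hQ : 1 < Q) (B c : ℝ) :
    Tendsto (fun n => (fun x => Q * x + B)^[n] c / Q ^ n) atTop (𝓝 (c + B / (Q - 1))) := by
  have hpow : Tendsto (fun n : ℕ => (Q ^ n)⁻¹) atTop (𝓝 0) :=
    tendsto_inv_atTop_zero.comp (tendsto_pow_atTop_atTop_of_one_lt hQ)
  have h := (hpow.const_mul (B / (Q - 1))).const_sub (c + B / (Q - 1))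
  rw [mul_zero, sub_zero] at h
  refine h.congr fun n => ?_
  rw [iterate_mul_add_eq hQ.ne', eq_div_iff (by positivity)]
  field_simp

section

variable {R : Type*} [Ring R] (v : AddValuation R (WithTop ℤ)) {q r : ℕ} {a : ℕ → R} {A B : ℤ}

theorem AddValuation.map_pow_of_eq_coe {x : R} {m : ℤ} (hx : v x = m) (n : ℕ) :
    v (x ^ n) = ((n * m : ℤ) : WithTop ℤ) := by
  rw [v.map_pow, hx, ← WithTop.coe_nsmul, nsmul_eq_mul]

theorem valuation_sum_eq_of_dominant (hq : 1 ≤ q) (hB : v (a r) = B)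
    (hdom : ∀ i < r, ((((q : ℤ) ^ r - (q : ℤ) ^ i) * A + B : ℤ) : WithTop ℤ) < v (a i))
    {x : R} {m : ℤ} (hm : m ≤ A) (hx : v x = m) :
    v (∑ i ∈ range (r + 1), a i * x ^ q ^ i) = (((q : ℤ) ^ r * m + B : ℤ) : WithTop ℤ) := by
  have hterm : ∀ i, v (a i * x ^ q ^ i) = v (a i) + (((q : ℤ) ^ i * m : ℤ) : WithTop ℤ) := by
    intro i
    rw [v.map_mul, v.map_pow_of_eq_coe hx]
    push_cast; rfl
  have hlead : v (a r * x ^ q ^ r) = (((q : ℤ) ^ r * m + B : ℤ) : WithTop ℤ) := by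
    rw [hterm, hB, ← WithTop.coe_add, add_comm]
  rw [v.map_sum_eq_of_lt (j := r) (by simp) fun i hi => ?_, hlead]
  have hir : i < r := by
    simp only [Finset.mem_sdiff, mem_range, mem_singleton] at hi
    omega
  rw [hlead, hterm i]
  cases hai : v (a i) with
  | top => exact WithTop.coe_lt_top _
  | coe b =>
    have hb := hdom i hir
    rw [hai, WithTop.coe_lt_coe] at hb
    rw [← WithTop.coe_add, WithTop.coe_lt_coe]
    have hpow : (q : ℤ) ^ i ≤ (q : ℤ) ^ r := pow_le_pow_right₀ (by exact_mod_cast hq) hir.le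
    nlinarith [mul_le_mul_of_nonneg_left hm (sub_nonneg.mpr hpow)]

theorem valuation_iterate_eq (hq : 1 ≤ q) (hB : v (a r) = B) (hB0 : B ≤ 0)
    (hdom : ∀ i < r, ((((q : ℤ) ^ r - (q : ℤ) ^ i) * A + B : ℤ) : WithTop ℤ) < v (a i))
    {f : R → R} (hf : ∀ x, f x = ∑ i ∈ range (r + 1), a i * x ^ q ^ i)
    {x : R} (hA : A ≤ 0) (hx : v x = A) (n : ℕ) :
    (fun c => (q : ℤ) ^ r * c + B)^[n] A ≤ A ∧
      v (f^[n] x) = ((fun c => (q : ℤ) ^ r * c + B)^[n] A : ℤ) := by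
  induction n with
  | zero => exact ⟨le_rfl, hx⟩
  | succ n ih =>
    obtain ⟨hle, heq⟩ := ih
    simp only [Function.iterate_succ_apply']
    refine ⟨?_, by rw [hf, valuation_sum_eq_of_dominant v hq hB hdom hle heq]⟩
    have hQ : 1 ≤ (q : ℤ) ^ r := one_le_pow₀ (by exact_mod_cast hq)
    nlinarith

end

theorem valuation_local_height_limit_general {L : Type*} [Field L] (v : L → WithTop ℤ)
    (hv_mul : ∀ x y, v (x * y) = v x + v y)
    (hv_add : ∀ x y, min (v x) (v y) ≤ v (x + y))
    (q r : ℕ) (hq : 2 ≤ q) (hr : 1 ≤ r)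
    (a : ℕ → L)
    (f : L → L) (hf : ∀ x, f x = ∑ i ∈ Finset.range (r + 1), a i * x ^ q ^ i)
    (hvar : v (a r) ≤ 0)
    (α : L) (hα0 : v α < 0)
    (hα : ∀ i < r,
      (((q : ℤ) ^ r - (q : ℤ) ^ i : ℤ) : WithTop ℤ) * v α + v (a r) < v (a i)) :
    Filter.Tendsto
      (fun n : ℕ => -(((min 0 (v (f^[n] α))).untopD 0 : ℤ) : ℝ) / (q : ℝ) ^ (n * r))
      Filter.atTop
      (nhds (-((((v α).untopD 0 : ℤ) : ℝ) +
        (((v (a r)).untopD 0 : ℤ) : ℝ) / ((q : ℝ) ^ r - 1)))) ∧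
    (1 : ℝ) ≤ -((((v α).untopD 0 : ℤ) : ℝ) +
      (((v (a r)).untopD 0 : ℤ) : ℝ) / ((q : ℝ) ^ r - 1)) := by
  obtain ⟨A, hA⟩ := WithTop.ne_top_iff_exists.mp hα0.ne_top
  obtain ⟨B, hB⟩ := WithTop.ne_top_iff_exists.mp (hvar.trans_lt (WithTop.coe_lt_top 0)).ne_top
  let w := AddValuation.of v (map_zero_eq_top_of_map_mul hv_mul hα0.ne)
    (map_one_eq_zero_of_map_mul hv_mul hα0.ne_top) hv_add hv_mul
  rw [← hA] at hα0 hα ⊢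
  rw [← hB] at hvar hα ⊢
  have hA0 : A < 0 := by exact_mod_cast hα0
  have hB0 : B ≤ 0 := by exact_mod_cast hvar
  have horbit := valuation_iterate_eq w (by omega) hB.symm hB0
    (fun i hi => by exact_mod_cast hα i hi) hf hA0.le hA.symm
  set Q : ℝ := (q : ℝ) ^ r
  have hQ : 1 < Q := one_lt_pow₀ (by exact_mod_cast hq) (by omega)
  have hcast : ∀ n, (((fun c : ℤ => (q : ℤ) ^ r * c + B)^[n] A : ℤ) : ℝ)
      = (fun x : ℝ => Q * x + B)^[n] A :=
    fun n => Function.Semiconj.iterate_right (fun c => by push_cast; rfl) n A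
  have hseq : ∀ n : ℕ, -(((min 0 (v (f^[n] α))).untopD 0 : ℤ) : ℝ) / (q : ℝ) ^ (n * r)
      = -((fun x : ℝ => Q * x + B)^[n] A / Q ^ n) := by
    intro n
    obtain ⟨hle, heq⟩ := horbit n
    rw [show v (f^[n] α) = w (f^[n] α) from rfl, heq,
      min_eq_right (by exact_mod_cast hle.trans (by omega)), WithTop.untopD_coe, hcast,
      pow_mul', neg_div]
  simp only [WithTop.untopD_coe]
  refine ⟨((tendsto_iterate_mul_add_div_pow hQ B A).neg).congr fun n => (hseq n).symm, ?_⟩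
  have hBQ : (B : ℝ) / (Q - 1) ≤ 0 :=
    div_nonpos_of_nonpos_of_nonneg (by exact_mod_cast hB0) (by linarith)
  have : (A : ℝ) ≤ -1 := by exact_mod_cast Int.le_sub_one_of_lt hA0
  linarith

/-- Let `v : L → ℤ ∪ {∞}` be a discrete valuation on a field `L`, `q ≥ 2`, `r ≥ 1`, and
`f(x) = a₀x + a₁x^q + ⋯ + a_r x^{q^r}` with `a_r ≠ 0`.  Suppose `v(a_r) ≤ 0`, `v(α) < 0` and
`v(α) < (v(aᵢ) − v(a_r))/(q^r − q^i)` for every `0 ≤ i < r` (stated below in the equivalent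
cross-multiplied form `(q^r − q^i)·v(α) + v(a_r) < v(aᵢ)`).  Then the sequence
`n ↦ −min{0, v(f^{∘n}(α))}/q^{nr}` converges to `−(v(α) + v(a_r)/(q^r − 1))`, which is `≥ 1`. -/
theorem valuation_local_height_limit {L : Type*} [Field L] (v : L → WithTop ℤ)
    (hv_surj : Function.Surjective v)
    (hv_zero : ∀ x, v x = ⊤ ↔ x = 0)
    (hv_mul : ∀ x y, v (x * y) = v x + v y)
    (hv_add : ∀ x y, min (v x) (v y) ≤ v (x + y))
    (q r : ℕ) (hq : 2 ≤ q) (hr : 1 ≤ r)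
    (a : ℕ → L) (har : a r ≠ 0)
    (f : L → L) (hf : ∀ x, f x = ∑ i ∈ Finset.range (r + 1), a i * x ^ q ^ i)
    (hvar : v (a r) ≤ 0)
    (α : L) (hα0 : v α < 0)
    (hα : ∀ i < r,
      (((q : ℤ) ^ r - (q : ℤ) ^ i : ℤ) : WithTop ℤ) * v α + v (a r) < v (a i)) :
    Filter.Tendsto
      (fun n : ℕ => -(((min 0 (v (f^[n] α))).untopD 0 : ℤ) : ℝ) / (q : ℝ) ^ (n * r))
      Filter.atTop
      (nhds (-((((v α).untopD 0 : ℤ) : ℝ) +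
        (((v (a r)).untopD 0 : ℤ) : ℝ) / ((q : ℝ) ^ r - 1)))) ∧
    (1 : ℝ) ≤ -((((v α).untopD 0 : ℤ) : ℝ) +
      (((v (a r)).untopD 0 : ℤ) : ℝ) / ((q : ℝ) ^ r - 1)) :=
  valuation_local_height_limit_general v hv_mul hv_add q r hq hr a f hf hvar α hα0 hα
end

section
/- Let G be an abelian group and h: G → ℝ a nonnegative function satisfying the parallelogram law h(x + y) + h(x − y) = 2h(x) + 2h(y) for all x, y ∈ G. Then for every integer N ≥ 1 and all points P_0, P_1, …, P_N ∈ G, one has max_{0 ≤ i ≤ N} h(P_i) ≥ (1/(4N(N+1))) · Σ_{i ≠ l} h(P_i − P_l), where the sum ranges over all ordered pairs (i, l) with 0 ≤ i, l ≤ N and i ≠ l. -/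
/-! Expanding `h(x + y) ≥ 0` with the parallelogram law gives `h(x - y) ≤ 2 h(x) + 2 h(y)`, so each
of the `N(N + 1)` off-diagonal terms `h(Pᵢ - P_l)` is at most `4 max_i h(Pᵢ)`. -/

theorem le_two_mul_add_two_mul_of_parallelogram {G : Type*} [Add G] [Sub G] {h : G → ℝ}
    (h_nonneg : ∀ x, 0 ≤ h x)
    (h_parallelogram : ∀ x y, h (x + y) + h (x - y) = 2 * h x + 2 * h y) (x y : G) :
    h (x - y) ≤ 2 * h x + 2 * h y := by
  linarith [h_parallelogram x y, h_nonneg (x + y)]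

theorem Finset.sum_sum_ite_ne_le_nsmul {ι M : Type*} [Fintype ι] [DecidableEq ι]
    [AddCommMonoid M] [PartialOrder M] [IsOrderedAddMonoid M] {f : ι → ι → M} {C : M}
    (hf : ∀ i l, i ≠ l → f i l ≤ C) :
    ∑ i, ∑ l, (if i ≠ l then f i l else 0) ≤ (Fintype.card ι * (Fintype.card ι - 1)) • C := by
  calc ∑ i, ∑ l, (if i ≠ l then f i l else 0)
      ≤ ∑ i : ι, ∑ l, (if i ≠ l then C else 0) := by
        gcongr with i _ l _
        split_ifs with hil
        exacts [hf i l hil, le_rfl]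
    _ = (Fintype.card ι * (Fintype.card ι - 1)) • C := by
        simp [Finset.sum_ite, Finset.filter_ne, Finset.card_univ, mul_nsmul']

theorem max_height_ge_sum_of_differences_general {G : Type*} [AddCommGroup G] (h : G → ℝ)
    (h_nonneg : ∀ x, 0 ≤ h x)
    (h_parallelogram : ∀ x y, h (x + y) + h (x - y) = 2 * h x + 2 * h y)
    (N : ℕ) (P : Fin (N + 1) → G) :
    (1 / (4 * N * (N + 1)) : ℝ) *
        ∑ i : Fin (N + 1), ∑ l : Fin (N + 1), (if i ≠ l then h (P i - P l) else 0) ≤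
      Finset.univ.sup' Finset.univ_nonempty (fun i => h (P i)) := by
  set M := Finset.univ.sup' Finset.univ_nonempty (fun i => h (P i))
  have h_le_M (i : Fin (N + 1)) : h (P i) ≤ M := Finset.le_sup' (fun i => h (P i)) (Finset.mem_univ i)
  have h_diff_le (i l : Fin (N + 1)) (_ : i ≠ l) : h (P i - P l) ≤ 4 * M := by
    linarith [le_two_mul_add_two_mul_of_parallelogram h_nonneg h_parallelogram (P i) (P l),
      h_le_M i, h_le_M l]
  have h_sum_le := Finset.sum_sum_ite_ne_le_nsmul h_diff_le
  simp only [Fintype.card_fin, add_tsub_cancel_right, nsmul_eq_mul] at h_sum_le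
  rw [one_div_mul_eq_div]
  refine div_le_of_le_mul₀ (by positivity) ((h_nonneg _).trans (h_le_M 0)) ?_
  push_cast at h_sum_le
  linarith

/-- If `h : G → ℝ` is a nonnegative function on an abelian group satisfying the parallelogram
law, then for any points `P₀, …, P_N` (`N ≥ 1`),
`max_i h(Pᵢ) ≥ (1/(4N(N+1))) ∑_{i ≠ l} h(Pᵢ − P_l)`, the sum being over ordered pairs. -/
theorem max_height_ge_sum_of_differences {G : Type*} [AddCommGroup G] (h : G → ℝ)
    (h_nonneg : ∀ x, 0 ≤ h x)
    (h_parallelogram : ∀ x y, h (x + y) + h (x - y) = 2 * h x + 2 * h y)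
    (N : ℕ) (hN : 1 ≤ N) (P : Fin (N + 1) → G) :
    (1 / (4 * N * (N + 1)) : ℝ) *
        ∑ i : Fin (N + 1), ∑ l : Fin (N + 1), (if i ≠ l then h (P i - P l) else 0) ≤
      Finset.univ.sup' Finset.univ_nonempty (fun i => h (P i)) :=
  max_height_ge_sum_of_differences_general h h_nonneg h_parallelogram N P
end
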